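/- arXiv:1112.1824 — 2 statements merged into one kernel-verified Lean document; each statement's English description precedes it below -/
import Mathlib

section
/- Let E₁, E₂, F be locally convex spaces and β : E₁ × E₂ → F be a continuous bilinear map. If both E₁ and E₂ have the countable neighbourhood property, then β admits product estimates. -/
/-- A bilinear map (given as a function) `β : E₁ × E₂ → F` *admits product estimates*
if for every double sequence `(p i j)` of continuous seminorms on `F` there exist
sequences `(P i)`, `(Q j)` of continuous seminorms on `E₁`, `E₂` with
`p i j (β x y) ≤ P i x * Q j y` for all `i, j, x, y`. -/
def ProductEstimates {E₁ E₂ F : Type*}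
    [AddCommGroup E₁] [Module ℝ E₁] [TopologicalSpace E₁]
    [AddCommGroup E₂] [Module ℝ E₂] [TopologicalSpace E₂]
    [AddCommGroup F] [Module ℝ F] [TopologicalSpace F]
    (β : E₁ → E₂ → F) : Prop :=
  ∀ p : ℕ → ℕ → Seminorm ℝ F, (∀ i j, Continuous (p i j)) →
    ∃ (P : ℕ → Seminorm ℝ E₁) (Q : ℕ → Seminorm ℝ E₂),
      (∀ i, Continuous (P i)) ∧ (∀ j, Continuous (Q j)) ∧
      ∀ (i j : ℕ) (x : E₁) (y : E₂), p i j (β x y) ≤ P i x * Q j y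

/-- A locally convex space `E` has the *countable neighbourhood property* (cnp) if every
countable family of continuous seminorms on `E` has an upper bound in the pre-order
`p ⪯ q ⟺ ∃ C > 0, p ≤ C·q`. -/
def CountableNeighbourhoodProperty (E : Type*)
    [AddCommGroup E] [Module ℝ E] [TopologicalSpace E] : Prop :=
  ∀ p : ℕ → Seminorm ℝ E, (∀ n, Continuous (p n)) →
    ∃ q : Seminorm ℝ E, Continuous q ∧
      ∀ n, ∃ C : ℝ, 0 < C ∧ ∀ x, p n x ≤ C * q x

/-!
Continuity of `β` bounds each `p i j (β x y)` by `P i j x * Q i j y` for continuous seminorms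
`P i j`, `Q i j`. The countable neighbourhood property gives single continuous seminorms `P₀`, `Q₀`
with `P i j ≤ C i j • P₀` and `Q i j ≤ D i j • Q₀`, and any double sequence of constants
`C i j * D i j` is dominated by a product `A i * A j`; then `A i • P₀` and `A j • Q₀` work.
-/

open Filter Topology NNReal

section LocallyConvex

variable {E : Type*} [AddCommGroup E] [Module ℝ E] [TopologicalSpace E]
  [IsTopologicalAddGroup E] [ContinuousSMul ℝ E] [LocallyConvexSpace ℝ E]

theorem exists_continuous_seminorm_ball_subset {U : Set E} (hU : U ∈ 𝓝 0) :
    ∃ P : Seminorm ℝ E, Continuous P ∧ P.ball 0 1 ⊆ U := by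
  obtain ⟨V, ⟨hV₀, hVopen, hVbal, hVconv⟩, hVU⟩ :=
    (nhds_hasBasis_absConvex_open ℝ E).mem_iff.mp hU
  have hV : V ∈ 𝓝 0 := hVopen.mem_nhds hV₀
  let P := gaugeSeminorm hVbal hVconv (absorbent_nhds_zero hV)
  have hPV : P.ball 0 1 = V := gaugeSeminorm_ball_one hVopen
  exact ⟨P, Seminorm.continuous (r := 1) (hPV ▸ hV), hPV ▸ hVU⟩

end LocallyConvex

theorem Seminorm.apply_inv_smul_lt_one {E : Type*} [AddCommGroup E] [Module ℝ E]
    (P : Seminorm ℝ E) {x : E} {a : ℝ} (ha : P x < a) : P (a⁻¹ • x) < 1 := by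
  have ha₀ : 0 < a := (apply_nonneg P x).trans_lt ha
  rw [map_smul_eq_mul, Real.norm_of_nonneg (inv_nonneg.2 ha₀.le), inv_mul_lt_one₀ ha₀]
  exact ha

section Bilinear

variable {E₁ E₂ F : Type*} [AddCommGroup E₁] [Module ℝ E₁] [AddCommGroup E₂] [Module ℝ E₂]
  [AddCommGroup F] [Module ℝ F]

theorem Seminorm.le_mul_of_forall_lt_one (β : E₁ →ₗ[ℝ] E₂ →ₗ[ℝ] F) {p : Seminorm ℝ F}
    {P : Seminorm ℝ E₁} {Q : Seminorm ℝ E₂}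
    (h : ∀ x y, P x < 1 → Q y < 1 → p (β x y) < 1) (x : E₁) (y : E₂) :
    p (β x y) ≤ P x * Q y := by
  have scaled : ∀ a b, P x < a → Q y < b → p (β x y) < a * b := by
    intro a b ha hb
    have ha₀ : 0 < a := (apply_nonneg P x).trans_lt ha
    have hb₀ : 0 < b := (apply_nonneg Q y).trans_lt hb
    have := h _ _ (P.apply_inv_smul_lt_one ha) (Q.apply_inv_smul_lt_one hb)
    rwa [LinearMap.map_smul₂, (β x).map_smul, smul_smul, map_smul_eq_mul,
      Real.norm_of_nonneg (by positivity), ← mul_inv, inv_mul_lt_one₀ (by positivity)] at this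
  have hlim : Tendsto (fun ε : ℝ => (P x + ε) * (Q y + ε)) (𝓝[>] 0) (𝓝 (P x * Q y)) :=
    (((continuous_const.add continuous_id).mul (continuous_const.add continuous_id)).tendsto' 0 _
      (by simp)).mono_left nhdsWithin_le_nhds
  refine ge_of_tendsto hlim (eventually_nhdsWithin_of_forall fun ε (hε : 0 < ε) => ?_)
  exact (scaled _ _ (lt_add_of_pos_right _ hε) (lt_add_of_pos_right _ hε)).le

variable [TopologicalSpace E₁] [IsTopologicalAddGroup E₁] [ContinuousSMul ℝ E₁]
  [LocallyConvexSpace ℝ E₁] [TopologicalSpace E₂] [IsTopologicalAddGroup E₂]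
  [ContinuousSMul ℝ E₂] [LocallyConvexSpace ℝ E₂] [TopologicalSpace F]

theorem exists_continuous_seminorm_mul_bound (β : E₁ →ₗ[ℝ] E₂ →ₗ[ℝ] F)
    (hβ : Continuous (fun xy : E₁ × E₂ => β xy.1 xy.2)) {p : Seminorm ℝ F} (hp : Continuous p) :
    ∃ (P : Seminorm ℝ E₁) (Q : Seminorm ℝ E₂), Continuous P ∧ Continuous Q ∧
      ∀ x y, p (β x y) ≤ P x * Q y := by
  have hW : (fun xy : E₁ × E₂ => β xy.1 xy.2) ⁻¹' p.ball 0 1 ∈ 𝓝 (0, 0) :=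
    hβ.continuousAt.preimage_mem_nhds (by simpa using p.ball_mem_nhds hp one_pos)
  obtain ⟨U, hU, V, hV, hUV⟩ := mem_nhds_prod_iff.mp hW
  obtain ⟨P, hP, hPU⟩ := exists_continuous_seminorm_ball_subset hU
  obtain ⟨Q, hQ, hQV⟩ := exists_continuous_seminorm_ball_subset hV
  refine ⟨P, Q, hP, hQ, Seminorm.le_mul_of_forall_lt_one β fun x y hx hy => ?_⟩
  have hxU : x ∈ U := hPU (by rwa [Seminorm.mem_ball_zero])
  have hyV : y ∈ V := hQV (by rwa [Seminorm.mem_ball_zero])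
  simpa using hUV (Set.mk_mem_prod hxU hyV)

end Bilinear

theorem CountableNeighbourhoodProperty.exists_bound_of_countable {E : Type*} [AddCommGroup E]
    [Module ℝ E] [TopologicalSpace E] (h : CountableNeighbourhoodProperty E) {ι : Type*}
    [Countable ι] (p : ι → Seminorm ℝ E) (hp : ∀ i, Continuous (p i)) :
    ∃ q : Seminorm ℝ E, Continuous q ∧ ∀ i, ∃ C : ℝ, ∀ x, p i x ≤ C * q x := by
  cases isEmpty_or_nonempty ι
  · exact ⟨0, by rw [FunLike.coe_zero]; exact continuous_const, isEmptyElim⟩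
  obtain ⟨f, hf⟩ := exists_surjective_nat ι
  obtain ⟨q, hq, hpq⟩ := h (p ∘ f) fun n => hp (f n)
  refine ⟨q, hq, fun i => ?_⟩
  obtain ⟨n, rfl⟩ := hf i
  obtain ⟨C, -, hC⟩ := hpq n
  exact ⟨C, hC⟩

theorem exists_seq_le_mul (D : ℕ → ℕ → ℝ) :
    ∃ A : ℕ → ℝ≥0, ∀ i j, D i j ≤ A i * A j := by
  let A n : ℝ≥0 := (Finset.range (n + 1) ×ˢ Finset.range (n + 1)).sup
    (fun kl => (D kl.1 kl.2).toNNReal) ⊔ 1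
  have hA₁ n : 1 ≤ A n := le_sup_right
  have hDA i j : D i j ≤ A (max i j) :=
    (Real.le_coe_toNNReal _).trans <| NNReal.coe_le_coe.mpr <| le_sup_of_le_left <|
      Finset.le_sup (f := fun kl : ℕ × ℕ => (D kl.1 kl.2).toNNReal) (b := (i, j))
        (by simp only [Finset.mem_product, Finset.mem_range]; omega)
  refine ⟨A, fun i j => (hDA i j).trans ?_⟩
  rw [← NNReal.coe_mul, NNReal.coe_le_coe]
  rcases le_total i j with h | h
  · rw [max_eq_right h]; exact le_mul_of_one_le_left' (hA₁ i)
  · rw [max_eq_left h]; exact le_mul_of_one_le_right' (hA₁ j)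

theorem productEstimates_of_cnp_domains_general {E₁ E₂ F : Type*}
    [AddCommGroup E₁] [Module ℝ E₁] [TopologicalSpace E₁]
    [IsTopologicalAddGroup E₁] [ContinuousSMul ℝ E₁] [LocallyConvexSpace ℝ E₁]
    [AddCommGroup E₂] [Module ℝ E₂] [TopologicalSpace E₂]
    [IsTopologicalAddGroup E₂] [ContinuousSMul ℝ E₂] [LocallyConvexSpace ℝ E₂]
    [AddCommGroup F] [Module ℝ F] [TopologicalSpace F]
    (β : E₁ →ₗ[ℝ] E₂ →ₗ[ℝ] F)
    (hβ : Continuous (fun xy : E₁ × E₂ => β xy.1 xy.2))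
    (h₁ : CountableNeighbourhoodProperty E₁)
    (h₂ : CountableNeighbourhoodProperty E₂) :
    ProductEstimates (fun x y => β x y) := by
  intro p hp
  choose P Q hP hQ hpPQ using fun i j => exists_continuous_seminorm_mul_bound β hβ (hp i j)
  obtain ⟨P₀, hP₀, hPP₀⟩ :=
    h₁.exists_bound_of_countable (fun ij : ℕ × ℕ => P ij.1 ij.2) fun _ => hP _ _
  obtain ⟨Q₀, hQ₀, hQQ₀⟩ :=
    h₂.exists_bound_of_countable (fun ij : ℕ × ℕ => Q ij.1 ij.2) fun _ => hQ _ _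
  choose C hC using hPP₀
  choose D hD using hQQ₀
  obtain ⟨A, hA⟩ := exists_seq_le_mul fun i j => C (i, j) * D (i, j)
  refine ⟨fun i => A i • P₀, fun j => A j • Q₀, fun i => hP₀.const_smul (A i),
    fun j => hQ₀.const_smul (A j), fun i j x y => ?_⟩
  calc p i j (β x y) ≤ P i j x * Q i j y := hpPQ i j x y
    _ ≤ (C (i, j) * P₀ x) * (D (i, j) * Q₀ y) :=
      mul_le_mul (hC (i, j) x) (hD (i, j) y) (apply_nonneg _ _)
        ((apply_nonneg _ _).trans (hC (i, j) x))
    _ = (C (i, j) * D (i, j)) * (P₀ x * Q₀ y) := by ring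
    _ ≤ (A i * A j) * (P₀ x * Q₀ y) := mul_le_mul_of_nonneg_right (hA i j) (by positivity)
    _ = (A i • P₀) x * (A j • Q₀) y := by
      simp only [FunLike.coe_smul, Pi.smul_apply, NNReal.smul_def, smul_eq_mul]; ring

/-- If `E₁` and `E₂` have the countable neighbourhood property, then every continuous
bilinear map `β : E₁ × E₂ → F` into a locally convex space admits product estimates. -/
theorem productEstimates_of_cnp_domains {E₁ E₂ F : Type*}
    [AddCommGroup E₁] [Module ℝ E₁] [TopologicalSpace E₁]
    [IsTopologicalAddGroup E₁] [ContinuousSMul ℝ E₁] [LocallyConvexSpace ℝ E₁] [T2Space E₁]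
    [AddCommGroup E₂] [Module ℝ E₂] [TopologicalSpace E₂]
    [IsTopologicalAddGroup E₂] [ContinuousSMul ℝ E₂] [LocallyConvexSpace ℝ E₂] [T2Space E₂]
    [AddCommGroup F] [Module ℝ F] [TopologicalSpace F]
    [IsTopologicalAddGroup F] [ContinuousSMul ℝ F] [LocallyConvexSpace ℝ F] [T2Space F]
    (β : E₁ →ₗ[ℝ] E₂ →ₗ[ℝ] F)
    (hβ : Continuous (fun xy : E₁ × E₂ => β xy.1 xy.2))
    (h₁ : CountableNeighbourhoodProperty E₁)
    (h₂ : CountableNeighbourhoodProperty E₂) :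
    ProductEstimates (fun x y => β x y) :=
  productEstimates_of_cnp_domains_general β hβ h₁ h₂
end

section
/- Let M be a paracompact, locally compact, non-compact Hausdorff space written as a topological disjoint union of open, σ-compact, non-empty subsets U_j (j ∈ J). Then the compact covering number θ(M) equals max{|J|, ℵ₀}. -/
/-!
Each `U j` is a countable union of compact sets, which gives a cover by `#J * ℵ₀` compact sets.
Conversely, a family of pairwise disjoint open sets covering `M` is locally finite, so a compact
set meets only finitely many `U j`; choosing for each `j` a member of a compact cover `S` that
meets `U j` gives a finite-to-one map `J → S`, whence `#J ≤ #S * ℵ₀`. Finally a non-compact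
space has no finite compact cover, so `ℵ₀ ≤ #S` and the product collapses to `#S`.
-/

universe u

/-- The *compact covering number* `θ(M)` of a topological space: the smallest
cardinality of a cover of `M` by compact subsets. -/
noncomputable def compactCoveringNumber (M : Type u) [TopologicalSpace M] : Cardinal.{u} :=
  sInf {c : Cardinal.{u} | ∃ S : Set (Set M),
    (∀ K ∈ S, IsCompact K) ∧ ⋃₀ S = Set.univ ∧ Cardinal.mk S = c}

open Set
open scoped Cardinal

theorem locallyFinite_of_pairwise_disjoint_isOpen_cover {X ι : Type*} [TopologicalSpace X]
    {U : ι → Set X} (hopen : ∀ i, IsOpen (U i)) (hdisj : Pairwise (Function.onFun Disjoint U))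
    (hcov : ⋃ i, U i = univ) : LocallyFinite U := by
  intro x
  obtain ⟨i, hxi⟩ := mem_iUnion.mp (hcov ▸ mem_univ x)
  refine ⟨U i, (hopen i).mem_nhds hxi, (finite_singleton i).subset fun j hj => ?_⟩
  by_contra hji
  exact hj.not_disjoint (hdisj hji)

section CompactCover

variable {M : Type u} [TopologicalSpace M]

theorem compactCoveringNumber_le {S : Set (Set M)} (hS : ∀ K ∈ S, IsCompact K)
    (hcov : ⋃₀ S = univ) : compactCoveringNumber M ≤ #S :=
  csInf_le' ⟨S, hS, hcov, rfl⟩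

theorem exists_compact_cover_mk_eq_compactCoveringNumber
    (h : ∃ S : Set (Set M), (∀ K ∈ S, IsCompact K) ∧ ⋃₀ S = univ) :
    ∃ S : Set (Set M), (∀ K ∈ S, IsCompact K) ∧ ⋃₀ S = univ ∧ #S = compactCoveringNumber M :=
  csInf_mem (s := {c | ∃ S : Set (Set M), (∀ K ∈ S, IsCompact K) ∧ ⋃₀ S = univ ∧ #S = c})
    (let ⟨S, hS, hcov⟩ := h; ⟨#S, S, hS, hcov, rfl⟩)

theorem aleph0_le_mk_of_compact_cover (hM : ¬ CompactSpace M) {S : Set (Set M)}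
    (hS : ∀ K ∈ S, IsCompact K) (hcov : ⋃₀ S = univ) : ℵ₀ ≤ #S := by
  by_contra! hlt
  have hfin : S.Finite := Cardinal.lt_aleph0_iff_set_finite.mp hlt
  exact hM (isCompact_univ_iff.mp (hcov ▸ hfin.isCompact_sUnion hS))

theorem exists_compact_cover_mk_le_of_iUnion_isSigmaCompact {J : Type u} {U : J → Set M}
    (hsc : ∀ j, IsSigmaCompact (U j)) (hcov : ⋃ j, U j = univ) :
    ∃ S : Set (Set M), (∀ K ∈ S, IsCompact K) ∧ ⋃₀ S = univ ∧ #S ≤ #J * ℵ₀ := by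
  choose K hK hKU using hsc
  refine ⟨range fun p : J × ℕ => K p.1 p.2, ?_, ?_, ?_⟩
  · rintro _ ⟨⟨j, n⟩, rfl⟩
    exact hK j n
  · simp only [sUnion_range, iUnion_prod', hKU, hcov]
  · simpa only [Cardinal.mk_prod, Cardinal.lift_uzero, Cardinal.mk_nat, Cardinal.lift_aleph0]
      using Cardinal.mk_range_le (f := fun p : J × ℕ => K p.1 p.2)

theorem LocallyFinite.mk_le_mk_mul_aleph0_of_compact_cover {J : Type u} {U : J → Set M}
    (hU : LocallyFinite U) (hne : ∀ j, (U j).Nonempty) {S : Set (Set M)}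
    (hS : ∀ K ∈ S, IsCompact K) (hcov : ⋃₀ S = univ) : #J ≤ #S * ℵ₀ := by
  have hmeet : ∀ j, ∃ K : S, (U j ∩ K).Nonempty := fun j => by
    obtain ⟨x, hx⟩ := hne j
    obtain ⟨K, hKS, hxK⟩ := mem_sUnion.mp (hcov ▸ mem_univ x)
    exact ⟨⟨K, hKS⟩, x, hx, hxK⟩
  choose f hf using hmeet
  refine Cardinal.mk_le_mk_mul_of_mk_preimage_le f fun K => ?_
  have hfin : {j | (U j ∩ K).Nonempty}.Finite := hU.finite_nonempty_inter_compact (hS K K.2)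
  refine (Cardinal.mk_le_mk_of_subset fun j (hj : f j = K) => ?_).trans hfin.countable.le_aleph0
  exact hj ▸ hf j

end CompactCover

theorem compactCoveringNumber_eq_of_sigmaCompact_partition_general {M : Type u} [TopologicalSpace M]
    (hM : ¬ CompactSpace M)
    {J : Type u} (U : J → Set M)
    (hopen : ∀ j, IsOpen (U j)) (hne : ∀ j, (U j).Nonempty)
    (hsc : ∀ j, IsSigmaCompact (U j))
    (hdisj : Pairwise (Function.onFun Disjoint U))
    (hcov : ⋃ j, U j = Set.univ) :
    compactCoveringNumber M = max (Cardinal.mk J) Cardinal.aleph0 := by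
  obtain ⟨S₀, hS₀, hS₀cov, hS₀J⟩ := exists_compact_cover_mk_le_of_iUnion_isSigmaCompact hsc hcov
  obtain ⟨S, hS, hScov, hSθ⟩ :=
    exists_compact_cover_mk_eq_compactCoveringNumber ⟨S₀, hS₀, hS₀cov⟩
  have hSℵ₀ : ℵ₀ ≤ #S := aleph0_le_mk_of_compact_cover hM hS hScov
  have hJS : #J ≤ #S := by
    simpa only [Cardinal.mul_aleph0_eq hSℵ₀] using
      (locallyFinite_of_pairwise_disjoint_isOpen_cover hopen hdisj hcov
        ).mk_le_mk_mul_aleph0_of_compact_cover hne hS hScov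
  refine le_antisymm ?_ (hSθ ▸ max_le hJS hSℵ₀)
  calc compactCoveringNumber M ≤ #S₀ := compactCoveringNumber_le hS₀ hS₀cov
    _ ≤ #J * ℵ₀ := hS₀J
    _ ≤ max (max #J ℵ₀) ℵ₀ := Cardinal.mul_le_max _ _
    _ = max #J ℵ₀ := by rw [max_assoc, max_self]

/-- If a paracompact, locally compact, non-compact Hausdorff space `M` is the topological
disjoint union of open, σ-compact, non-empty subsets `U j` (`j ∈ J`), then the compact
covering number of `M` equals `max {#J, ℵ₀}`. -/
theorem compactCoveringNumber_eq_of_sigmaCompact_partition {M : Type u} [TopologicalSpace M]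
    [T2Space M] [ParacompactSpace M] [LocallyCompactSpace M] (hM : ¬ CompactSpace M)
    {J : Type u} (U : J → Set M)
    (hopen : ∀ j, IsOpen (U j)) (hne : ∀ j, (U j).Nonempty)
    (hsc : ∀ j, IsSigmaCompact (U j))
    (hdisj : Pairwise (Function.onFun Disjoint U))
    (hcov : ⋃ j, U j = Set.univ) :
    compactCoveringNumber M = max (Cardinal.mk J) Cardinal.aleph0 :=
  compactCoveringNumber_eq_of_sigmaCompact_partition_general hM U hopen hne hsc hdisj hcov
end
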